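/- Let n ≥ 2 be an integer and λ_1, λ_2, …, λ_{2n} reals. Let V be the 2n×2n block matrix [[V11, V12],[V21, V22]] with V11 = (1/√2)·E_{1,1} + ∑_{i=2}^n E_{i,i}, V12 = (1/√2)·E_{1,1}, V21 = (1/√2)·E_{n,1}, V22 = −(1/√2)·E_{n,1} + ∑_{i=1}^{n−1} E_{i,i+1}. Then V·diag(λ_1,…,λ_{2n})·Vᵀ = ρ'_Λ, the X-matrix whose entries are (ρ'_Λ)_{1,1} = (ρ'_Λ)_{2n,2n} = (λ_1+λ_{n+1})/2, (ρ'_Λ)_{1,2n} = (ρ'_Λ)_{2n,1} = (λ_1−λ_{n+1})/2, (ρ'_Λ)_{j,j} = λ_j and (ρ'_Λ)_{2n+1−j,2n+1−j} = λ_{2n+2−j} for 2 ≤ j ≤ n, and all other entries zero. -/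

import Mathlib

/-- The `2n × 2n` block matrix `V = [[V11, V12], [V21, V22]]` with (0-based entries)
`V11 = (1/√2)E_{1,1} + ∑_{i=2}^n E_{i,i}`, `V12 = (1/√2)E_{1,1}`, `V21 = (1/√2)E_{n,1}`,
`V22 = -(1/√2)E_{n,1} + ∑_{i=1}^{n-1} E_{i,i+1}`. -/
noncomputable def Vmat (n : ℕ) : Matrix (Fin (2 * n)) (Fin (2 * n)) ℝ :=
  Matrix.of fun i j =>
    if i.val = 0 ∧ j.val = 0 then 1 / Real.sqrt 2
    else if i.val = 0 ∧ j.val = n then 1 / Real.sqrt 2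
    else if i.val = 2 * n - 1 ∧ j.val = 0 then 1 / Real.sqrt 2
    else if i.val = 2 * n - 1 ∧ j.val = n then -(1 / Real.sqrt 2)
    else if i = j ∧ 1 ≤ i.val ∧ i.val ≤ n - 1 then 1
    else if n ≤ i.val ∧ i.val ≤ 2 * n - 2 ∧ j.val = i.val + 1 then 1
    else 0

/-- The X-matrix `ρ'_Λ` built from a spectrum `lam` (0-based: `λ_k = lam (k-1)`). -/
noncomputable def rhoPrime (n : ℕ) (lam : ℕ → ℝ) :
    Matrix (Fin (2 * n)) (Fin (2 * n)) ℝ :=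
  Matrix.of fun i j =>
    if (i.val = 0 ∧ j.val = 0) ∨ (i.val = 2 * n - 1 ∧ j.val = 2 * n - 1) then
      (lam 0 + lam n) / 2
    else if (i.val = 0 ∧ j.val = 2 * n - 1) ∨ (i.val = 2 * n - 1 ∧ j.val = 0) then
      (lam 0 - lam n) / 2
    else if i = j ∧ 1 ≤ i.val ∧ i.val ≤ n - 1 then lam i.val
    else if i = j ∧ n ≤ i.val ∧ i.val ≤ 2 * n - 2 then lam (i.val + 1)
    else 0

/-! Apart from the first and last rows, which are `(e₁ ± e_{n+1})/√2`, every row of `V` is a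
standard basis vector (`e_i` for `2 ≤ i ≤ n`, `e_{i+1}` for `n < i < 2n`). So the entry
`∑ₖ V i k λₖ V j k` of `V diag(λ) Vᵀ` has at most two nonzero terms, and only the two corner rows
mix `λ₁` and `λ_{n+1}`, with weights `(1/√2)² = 1/2`. -/

open Matrix

lemma Matrix.mul_diagonal_mul_transpose_apply_of_support {m n α : Type*} [Fintype n]
    [DecidableEq n] [NonUnitalNonAssocSemiring α] (A B : Matrix m n α) (d : n → α)
    (i j : m) (s : Finset n) (hs : ∀ k ∉ s, A i k = 0) :
    (A * diagonal d * Bᵀ) i j = ∑ k ∈ s, A i k * d k * B j k := by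
  rw [mul_apply]
  simp only [mul_diagonal, transpose_apply]
  exact (Finset.sum_subset s.subset_univ fun k _ hk => by simp [hs k hk]).symm

lemma one_div_sqrt_two_mul_self : 1 / √2 * (1 / √2) = (1 / 2 : ℝ) := by
  rw [div_mul_div_comm, one_mul, Real.mul_self_sqrt zero_le_two]

section

variable {n : ℕ}

lemma Vmat_apply (i j : Fin (2 * n)) :
    Vmat n i j =
      if i.val = 0 then
        (if j.val = 0 then 1 / √2 else if j.val = n then 1 / √2 else 0)
      else if i.val = 2 * n - 1 then
        (if j.val = 0 then 1 / √2 else if j.val = n then -(1 / √2) else 0)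
      else if i.val < n then (if j.val = i.val then 1 else 0)
      else (if j.val = i.val + 1 then 1 else 0) := by
  have := i.isLt
  simp only [Vmat, of_apply, Fin.ext_iff]
  split_ifs <;> first | rfl | omega

lemma Vmat_apply_zero_right (i : Fin (2 * n)) (h : 0 < 2 * n) :
    Vmat n i ⟨0, h⟩ = if i.val = 0 ∨ i.val = 2 * n - 1 then 1 / √2 else 0 := by
  rw [Vmat_apply]
  split_ifs <;> simp_all

lemma Vmat_apply_n_right (i : Fin (2 * n)) (h : n < 2 * n) :
    Vmat n i ⟨n, h⟩ =
      if i.val = 0 then 1 / √2 else if i.val = 2 * n - 1 then -(1 / √2) else 0 := by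
  rw [Vmat_apply]
  split_ifs <;> simp_all

lemma Vmat_apply_of_lt_right {k : Fin (2 * n)} (hk0 : k.val ≠ 0) (hkn : k.val < n)
    (i : Fin (2 * n)) : Vmat n i k = if i.val = k.val then 1 else 0 := by
  rw [Vmat_apply]
  split_ifs <;> first | rfl | omega

lemma Vmat_apply_of_gt_right {k : Fin (2 * n)} (hnk : n < k.val) (i : Fin (2 * n)) :
    Vmat n i k = if i.val + 1 = k.val then 1 else 0 := by
  have := k.isLt
  rw [Vmat_apply]
  split_ifs <;> first | rfl | omega

variable (lam : ℕ → ℝ) {i : Fin (2 * n)} (j : Fin (2 * n))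

lemma Vmat_conj_apply_of_corner (hi : i.val = 0 ∨ i.val = 2 * n - 1) :
    (Vmat n * diagonal (fun k : Fin (2 * n) => lam k.val) * (Vmat n)ᵀ) i j =
      rhoPrime n lam i j := by
  have := i.isLt
  have h0n : (⟨0, by omega⟩ : Fin (2 * n)) ≠ ⟨n, by omega⟩ := by
    rw [Ne, Fin.mk.injEq]; omega
  rw [mul_diagonal_mul_transpose_apply_of_support _ _ _ i j {⟨0, by omega⟩, ⟨n, by omega⟩}
    (fun k hk => by
      simp only [Finset.mem_insert, Finset.mem_singleton, Fin.ext_iff, not_or] at hk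
      rw [Vmat_apply]; split_ifs <;> first | rfl | omega), Finset.sum_pair h0n]
  have h := one_div_sqrt_two_mul_self
  simp only [Vmat_apply_zero_right, Vmat_apply_n_right, rhoPrime, of_apply, Fin.ext_iff]
  split_ifs <;> first | omega | ring1 | linear_combination (lam 0 + lam n) * h |
    linear_combination (lam 0 - lam n) * h

lemma Vmat_conj_apply_of_lt (hi0 : i.val ≠ 0) (hin : i.val < n) :
    (Vmat n * diagonal (fun k : Fin (2 * n) => lam k.val) * (Vmat n)ᵀ) i j =
      rhoPrime n lam i j := by
  rw [mul_diagonal_mul_transpose_apply_of_support _ _ _ i j {i}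
    (fun k hk => by
      rw [Finset.mem_singleton, Fin.ext_iff] at hk
      rw [Vmat_apply]; split_ifs <;> first | rfl | omega), Finset.sum_singleton,
    Vmat_apply_of_lt_right hi0 hin, Vmat_apply_of_lt_right hi0 hin]
  simp only [rhoPrime, of_apply, Fin.ext_iff]
  split_ifs <;> first | omega | ring1

lemma Vmat_conj_apply_of_ge (hni : n ≤ i.val) (hi : i.val ≠ 2 * n - 1) :
    (Vmat n * diagonal (fun k : Fin (2 * n) => lam k.val) * (Vmat n)ᵀ) i j =
      rhoPrime n lam i j := by
  have := i.isLt
  have hni' : n < i.val + 1 := by omega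
  rw [mul_diagonal_mul_transpose_apply_of_support _ _ _ i j {⟨i.val + 1, by omega⟩}
    (fun k hk => by
      rw [Finset.mem_singleton, Fin.ext_iff] at hk
      rw [Vmat_apply]; split_ifs <;> first | rfl | omega), Finset.sum_singleton,
    Vmat_apply_of_gt_right hni', Vmat_apply_of_gt_right hni']
  simp only [rhoPrime, of_apply, Fin.ext_iff]
  split_ifs <;> first | omega | ring1

end

theorem Vmat_diagonal_conj_general (n : ℕ) (lam : ℕ → ℝ) :
    Vmat n * Matrix.diagonal (fun i : Fin (2 * n) => lam i.val) * (Vmat n).transpose =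
      rhoPrime n lam := by
  ext i j
  by_cases hcorner : i.val = 0 ∨ i.val = 2 * n - 1
  · exact Vmat_conj_apply_of_corner lam j hcorner
  push Not at hcorner
  rcases lt_or_ge i.val n with hin | hni
  · exact Vmat_conj_apply_of_lt lam j hcorner.1 hin
  · exact Vmat_conj_apply_of_ge lam j hni hcorner.2

/-- Conjugating the diagonal matrix `diag(λ_1, …, λ_{2n})` by the orthogonal matrix `V`
produces the X-matrix `ρ'_Λ`: `V · diag(λ) · Vᵀ = ρ'_Λ`. -/
theorem Vmat_diagonal_conj (n : ℕ) (hn : 2 ≤ n) (lam : ℕ → ℝ) :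
    Vmat n * Matrix.diagonal (fun i : Fin (2 * n) => lam i.val) * (Vmat n).transpose =
      rhoPrime n lam :=
  Vmat_diagonal_conj_general n lam
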